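/- arXiv:2308.00753 — 4 statements merged into one kernel-verified Lean document; each statement's English description precedes it below -/
import Mathlib

section
/- Let S_1, …, S_n be self-adjoint unitary matrices that pairwise anticommute, and let ρ be a density matrix. Then Σ_{i=1}^n (tr(ρ S_i))² ≤ 1. -/
open Matrix ComplexOrder

/- Put `T = ∑ᵢ tᵢ Sᵢ` with `tᵢ = tr(ρ Sᵢ)`. Anticommutation makes `T² = (∑ᵢ tᵢ²) • 1`, while
`tr(ρ T) = ∑ᵢ tᵢ²`. Positivity of `ρ` gives `0 ≤ tr(ρ (1 - T)²) = 1 - 2 ∑ᵢ tᵢ² + ∑ᵢ tᵢ²`. -/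

theorem sum_smul_mul_self_of_anticommute {ι R A : Type*} [CommSemiring R] [Semiring A]
    [Algebra R A] (s : Finset ι) (c : ι → R) {S : ι → A} (hsq : ∀ i, S i * S i = 1)
    (hanti : ∀ i j, i ≠ j → S i * S j + S j * S i = 0) :
    (∑ i ∈ s, c i • S i) * (∑ i ∈ s, c i • S i) = (∑ i ∈ s, c i ^ 2) • 1 := by
  classical
  induction s using Finset.induction_on with
  | empty => simp
  | insert a s ha ih =>
    set X := ∑ i ∈ s, c i • S i
    have hcross : S a * X + X * S a = 0 := by
      rw [Finset.sum_mul, Finset.mul_sum, ← Finset.sum_add_distrib]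
      refine Finset.sum_eq_zero fun i hi => ?_
      rw [mul_smul_comm, smul_mul_assoc, ← smul_add,
        hanti a i (ne_of_mem_of_not_mem hi ha).symm, smul_zero]
    have hexpand : (c a • S a + X) * (c a • S a + X)
        = c a ^ 2 • (S a * S a) + c a • (S a * X + X * S a) + X * X := by
      simp only [add_mul, mul_add, smul_mul_assoc, mul_smul_comm, smul_add, smul_smul,
        sq]
      abel
    rw [Finset.sum_insert ha, Finset.sum_insert ha, hexpand, hsq, hcross, ih, smul_zero,
      add_zero, add_smul]

theorem Matrix.PosSemidef.trace_mul_conjTranspose_mul_nonneg {m R : Type*} [Fintype m]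
    [CommRing R] [PartialOrder R] [StarRing R] [AddLeftMono R] {ρ : Matrix m m R}
    (hρ : ρ.PosSemidef) (X : Matrix m m R) : 0 ≤ (ρ * (Xᴴ * X)).trace := by
  rw [← Matrix.mul_assoc, trace_mul_comm, ← Matrix.mul_assoc]
  exact (hρ.mul_mul_conjTranspose_same X).trace_nonneg

/-- For pairwise anticommuting self-adjoint unitaries `S_i` and any density matrix `ρ`,
`Σ_i (tr ρ S_i)² ≤ 1`. -/
theorem sum_sq_expectation_le_one_of_anticommuting {n d : ℕ}
    (S : Fin n → Matrix (Fin d) (Fin d) ℂ)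
    (hherm : ∀ i, (S i).IsHermitian)
    (hsq : ∀ i, S i * S i = 1)
    (hanti : ∀ i j, i ≠ j → S i * S j + S j * S i = 0)
    (ρ : Matrix (Fin d) (Fin d) ℂ) (hρ : ρ.PosSemidef) (htr : ρ.trace = 1) :
    ∑ i, ((ρ * S i).trace.re)^2 ≤ 1 := by
  set t : Fin n → ℝ := fun i => (ρ * S i).trace.re
  set T := ∑ i, t i • S i
  have hT : Tᴴ = T := by
    simp only [T, conjTranspose_sum, conjTranspose_smul, star_trivial, (hherm _).eq]
  have hTT : T * T = (∑ i, t i ^ 2) • 1 := sum_smul_mul_self_of_anticommute _ t hsq hanti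
  have hρT : (ρ * T).trace.re = ∑ i, t i ^ 2 := by
    simp [T, Matrix.mul_sum, trace_sum, sq, t]
  have hexpand : ρ * ((1 - T)ᴴ * (1 - T)) = ρ - (2 : ℝ) • (ρ * T) + (∑ i, t i ^ 2) • ρ := by
    rw [conjTranspose_sub, conjTranspose_one, hT]
    simp only [sub_mul, mul_sub, one_mul, mul_one, hTT, mul_smul_comm, two_smul]
    abel
  have hpos := hρ.trace_mul_conjTranspose_mul_nonneg (1 - T)
  rw [hexpand, trace_add, trace_sub, trace_smul, trace_smul, htr] at hpos
  obtain ⟨hre, -⟩ := Complex.nonneg_iff.mp hpos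
  simp only [Complex.add_re, Complex.sub_re, Complex.smul_re, Complex.one_re, smul_eq_mul, mul_one,
    hρT] at hre
  linarith
end

section
/- Quadratic-form bound: let A_1,…,A_n be self-adjoint matrices with A_i² ≤ 1, ρ a density matrix, and w_1,…,w_n ≥ 0. Define the real symmetric n×n matrix M with entries M_{ij} = √(w_i w_j) · tr(ρ (A_i A_j + A_j A_i)/2). Then Σ_i w_i (tr ρ A_i)² ≤ λ_max(M), the largest eigenvalue of M. -/
/-!
Put `xᵢ = √wᵢ · tr(ρ Aᵢ)` and `B = ∑ᵢ √wᵢ xᵢ Aᵢ`. Then `tr(ρ B) = |x|²`, which is the left-hand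
side `S`, and `tr(ρ B²) = xᵀ M x ≤ λ_max |x|²`. Since the variance of `B` in the state `ρ` is
nonnegative, `S² = tr(ρ B)² ≤ tr(ρ B²) ≤ λ_max S`; and `λ_max ≥ 0` because every quadratic form
`yᵀ M y` is such a `tr(ρ B_y²) ≥ 0`. Hence `S ≤ λ_max`.
-/

open Matrix ComplexOrder

namespace Matrix

variable {m ι 𝕜 : Type*} [RCLike 𝕜]

lemma isHermitian_sum_smul [Fintype ι] {A : ι → Matrix m m 𝕜} (hA : ∀ i, (A i).IsHermitian)
    (c : ι → ℝ) : (∑ i, c i • A i).IsHermitian :=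
  isSelfAdjoint_sum _ fun i _ => (hA i).smul (IsSelfAdjoint.all (c i))

variable [Fintype m]

lemma PosSemidef.re_trace_mul_mul_self_nonneg {ρ C : Matrix m m 𝕜} (hρ : ρ.PosSemidef)
    (hC : C.IsHermitian) : 0 ≤ RCLike.re (ρ * (C * C)).trace := by
  have hcyc : (ρ * (C * C)).trace = (Cᴴ * ρ * C).trace := by
    rw [hC.eq, ← Matrix.mul_assoc, trace_mul_comm, Matrix.mul_assoc]
  rw [hcyc]
  exact (RCLike.nonneg_iff.mp (hρ.conjTranspose_mul_mul_same C).trace_nonneg).1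

lemma PosSemidef.sq_re_trace_mul_le [DecidableEq m] {ρ B : Matrix m m 𝕜} (hρ : ρ.PosSemidef)
    (htr : ρ.trace = 1) (hB : B.IsHermitian) :
    RCLike.re (ρ * B).trace ^ 2 ≤ RCLike.re (ρ * (B * B)).trace := by
  set μ := RCLike.re (ρ * B).trace
  have hC : (B - μ • (1 : Matrix m m 𝕜)).IsHermitian :=
    hB.sub (isHermitian_one.smul (IsSelfAdjoint.all μ))
  have hvar := hρ.re_trace_mul_mul_self_nonneg hC
  simp only [Matrix.mul_sub, Matrix.sub_mul, Matrix.mul_smul, Matrix.smul_mul, Matrix.mul_one,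
    Matrix.one_mul, trace_sub, trace_smul, htr, map_sub, RCLike.smul_re, RCLike.one_re] at hvar
  nlinarith

lemma re_trace_mul_mul_comm {ρ A B : Matrix m m 𝕜} (hρ : ρ.IsHermitian) (hA : A.IsHermitian)
    (hB : B.IsHermitian) : RCLike.re (ρ * (B * A)).trace = RCLike.re (ρ * (A * B)).trace := by
  rw [← RCLike.conj_re, ← RCLike.star_def, ← trace_conjTranspose, conjTranspose_mul,
    conjTranspose_mul, hρ.eq, hA.eq, hB.eq, trace_mul_comm]

section WeightedCorrelation

variable [Fintype ι]

lemma re_trace_mul_sum_smul_mul_sum_smul (ρ : Matrix m m 𝕜) (A : ι → Matrix m m 𝕜) (c : ι → ℝ) :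
    RCLike.re (ρ * ((∑ i, c i • A i) * (∑ i, c i • A i))).trace
      = ∑ i, ∑ j, c i * c j * RCLike.re (ρ * (A i * A j)).trace := by
  rw [Finset.sum_mul_sum]
  simp only [smul_mul_smul_comm, Finset.mul_sum, Matrix.mul_smul, trace_sum, trace_smul, map_sum,
    RCLike.smul_re]

lemma dotProduct_mulVec_eq_re_trace_mul_sum_smul_mul_self {ρ : Matrix m m 𝕜}
    {A : ι → Matrix m m 𝕜} {c : ι → ℝ} {M : Matrix ι ι ℝ}
    (hM : ∀ i j, M i j = c i * c j * RCLike.re (ρ * (A i * A j)).trace) (y : ι → ℝ) :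
    y ⬝ᵥ M *ᵥ y
      = RCLike.re (ρ * ((∑ i, (c i * y i) • A i) * (∑ i, (c i * y i) • A i))).trace := by
  rw [re_trace_mul_sum_smul_mul_sum_smul]
  simp only [dotProduct, mulVec, hM, Finset.mul_sum]
  exact Finset.sum_congr rfl fun i _ => Finset.sum_congr rfl fun j _ => by ring

lemma posSemidef_of_eq_re_trace_mul {ρ : Matrix m m 𝕜} {A : ι → Matrix m m 𝕜} {c : ι → ℝ}
    {M : Matrix ι ι ℝ} (hρ : ρ.PosSemidef) (hA : ∀ i, (A i).IsHermitian) (hMh : M.IsHermitian)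
    (hM : ∀ i j, M i j = c i * c j * RCLike.re (ρ * (A i * A j)).trace) : M.PosSemidef :=
  .of_dotProduct_mulVec_nonneg hMh fun y => by
    rw [star_trivial, dotProduct_mulVec_eq_re_trace_mul_sum_smul_mul_self hM]
    exact hρ.re_trace_mul_mul_self_nonneg (isHermitian_sum_smul hA _)

end WeightedCorrelation

lemma IsHermitian.posSemidef_iSup_eigenvalues_smul_one_sub [DecidableEq m] {M : Matrix m m 𝕜}
    (hM : M.IsHermitian) : ((⨆ i, hM.eigenvalues i) • 1 - M).PosSemidef := by
  open scoped MatrixOrder in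
  have : M ≤ algebraMap ℝ (Matrix m m 𝕜) (⨆ i, hM.eigenvalues i) := by
    refine le_algebraMap_of_spectrum_le fun r hr => ?_
    obtain ⟨i, rfl⟩ := hM.spectrum_real_eq_range_eigenvalues ▸ hr
    exact le_ciSup (Set.finite_range _).bddAbove i
  simpa [Matrix.le_iff, Algebra.algebraMap_eq_smul_one] using this

lemma IsHermitian.dotProduct_mulVec_le_iSup_eigenvalues_smul [DecidableEq m] {M : Matrix m m 𝕜}
    (hM : M.IsHermitian) (x : m → 𝕜) :
    star x ⬝ᵥ M *ᵥ x ≤ (⨆ i, hM.eigenvalues i) • (star x ⬝ᵥ x) := by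
  have := hM.posSemidef_iSup_eigenvalues_smul_one_sub.dotProduct_mulVec_nonneg x
  rwa [sub_mulVec, smul_mulVec, one_mulVec, dotProduct_sub, dotProduct_smul, sub_nonneg] at this

end Matrix

theorem sum_weighted_sq_expectation_le_lambdaMax_general {n d : ℕ}
    (A : Fin n → Matrix (Fin d) (Fin d) ℂ)
    (hherm : ∀ i, (A i).IsHermitian)
    (ρ : Matrix (Fin d) (Fin d) ℂ) (hρ : ρ.PosSemidef) (htr : ρ.trace = 1)
    (w : Fin n → ℝ) (hw : ∀ i, 0 ≤ w i)
    (M : Matrix (Fin n) (Fin n) ℝ)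
    (hMdef : ∀ i j, M i j =
      Real.sqrt (w i * w j) * ((ρ * (A i * A j + A j * A i)).trace.re / 2))
    (hM : M.IsHermitian) :
    ∑ i, w i * ((ρ * A i).trace.re)^2 ≤ ⨆ j, hM.eigenvalues j := by
  have hMc : ∀ i j, M i j = √(w i) * √(w j) * RCLike.re (ρ * (A i * A j)).trace := by
    intro i j
    rw [hMdef, Real.sqrt_mul (hw i), Matrix.mul_add, trace_add, Complex.add_re]
    have := re_trace_mul_mul_comm hρ.isHermitian (hherm i) (hherm j)
    simp only [RCLike.re_to_complex] at this ⊢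
    rw [this]
    ring
  set x : Fin n → ℝ := fun i => √(w i) * (ρ * A i).trace.re
  set B := ∑ i, (√(w i) * x i) • A i
  have hsum : ∑ i, w i * (ρ * A i).trace.re ^ 2 = x ⬝ᵥ x :=
    Finset.sum_congr rfl fun i _ => by
      rw [mul_mul_mul_comm, Real.mul_self_sqrt (hw i), sq]
  have hmean : RCLike.re (ρ * B).trace = x ⬝ᵥ x := by
    simp only [B, Finset.mul_sum, Matrix.mul_smul, trace_sum, trace_smul, map_sum, RCLike.smul_re,
      dotProduct, x, RCLike.re_to_complex]
    exact Finset.sum_congr rfl fun i _ => by ring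
  have hvar : (x ⬝ᵥ x) ^ 2 ≤ x ⬝ᵥ M *ᵥ x := by
    rw [← hmean, dotProduct_mulVec_eq_re_trace_mul_sum_smul_mul_self hMc]
    exact hρ.sq_re_trace_mul_le htr (isHermitian_sum_smul hherm _)
  have hray : x ⬝ᵥ M *ᵥ x ≤ (⨆ j, hM.eigenvalues j) * (x ⬝ᵥ x) := by
    simpa using hM.dotProduct_mulVec_le_iSup_eigenvalues_smul x
  have hmax : 0 ≤ ⨆ j, hM.eigenvalues j :=
    Real.iSup_nonneg ((posSemidef_of_eq_re_trace_mul hρ hherm hM hMc).eigenvalues_nonneg)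
  rw [hsum]
  nlinarith

/-- Quadratic-form bound: `Σ_i w_i (tr ρ A_i)² ≤ λ_max(M)` where
`M_{ij} = √(w_i w_j) · tr(ρ (A_i A_j + A_j A_i)/2)`. -/
theorem sum_weighted_sq_expectation_le_lambdaMax {n d : ℕ}
    (A : Fin n → Matrix (Fin d) (Fin d) ℂ)
    (hherm : ∀ i, (A i).IsHermitian)
    (hsq : ∀ i, (1 - A i * A i).PosSemidef)
    (ρ : Matrix (Fin d) (Fin d) ℂ) (hρ : ρ.PosSemidef) (htr : ρ.trace = 1)
    (w : Fin n → ℝ) (hw : ∀ i, 0 ≤ w i)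
    (M : Matrix (Fin n) (Fin n) ℝ)
    (hMdef : ∀ i j, M i j =
      Real.sqrt (w i * w j) * ((ρ * (A i * A j + A j * A i)).trace.re / 2))
    (hM : M.IsHermitian) :
    ∑ i, w i * ((ρ * A i).trace.re)^2 ≤ ⨆ j, hM.eigenvalues j :=
  sum_weighted_sq_expectation_le_lambdaMax_general A hherm ρ hρ htr w hw M hMdef hM
end

section
/- Two-qubit identity: for every unit vector |ψ⟩ ∈ ℂ^4, ⟨I⊗Y⟩² + ⟨X⊗X⟩² + ⟨Z⊗Z⟩² − ⟨Y⊗Y⟩² ≤ 1, where ⟨A⟩ = ⟨ψ|A|ψ⟩; moreover equality is attained by the maximally entangled state (|00⟩+|11⟩)/√2. -/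
/-!
Write `a, b, c, d` for the amplitudes of `|00⟩, |01⟩, |10⟩, |11⟩`. Each of the four expectation
values is a quadratic form in these amplitudes, and after homogenizing with
`‖ψ‖⁴ = (|a|² + |b|² + |c|² + |d|²)²` the deficit `‖ψ‖⁴ - (⟨I⊗Y⟩² + ⟨X⊗X⟩² + ⟨Z⊗Z⟩² - ⟨Y⊗Y⟩²)`
is four times a sum of three squares, so it is nonnegative. For the maximally entangled state
one computes `⟨I⊗Y⟩ = 0` and `⟨X⊗X⟩ = ⟨Z⊗Z⟩ = -⟨Y⊗Y⟩ = 1`.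
-/

open Matrix Kronecker

namespace Stmt13

def X : Matrix (Fin 2) (Fin 2) ℂ := !![0, 1; 1, 0]
def Y : Matrix (Fin 2) (Fin 2) ℂ := !![0, -Complex.I; Complex.I, 0]
def Z : Matrix (Fin 2) (Fin 2) ℂ := !![1, 0; 0, -1]
def I2 : Matrix (Fin 2) (Fin 2) ℂ := 1

/-- Expectation value `⟨ψ|A|ψ⟩` (real part) of a two-qubit observable. -/
noncomputable def e (A : Matrix (Fin 2 × Fin 2) (Fin 2 × Fin 2) ℂ)
    (ψ : Fin 2 × Fin 2 → ℂ) : ℝ := (star ψ ⬝ᵥ A.mulVec ψ).re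

/-- The maximally entangled state `(|00⟩+|11⟩)/√2`. -/
noncomputable def ψME : Fin 2 × Fin 2 → ℂ :=
  fun p => if p.1 = p.2 then (1 / Real.sqrt 2 : ℝ) else 0

open ComplexConjugate Complex

theorem ladder_sum_of_squares (a b c d : ℂ) :
    (normSq a + normSq b + normSq c + normSq d) ^ 2
      - ((2 * (conj a * b + conj c * d).im) ^ 2 + (2 * (conj a * d + conj b * c).re) ^ 2
        + (normSq a - normSq b - normSq c + normSq d) ^ 2
        - (2 * (conj b * c - conj a * d).re) ^ 2)
      = 4 * (conj a * b - conj c * d).re ^ 2 + 4 * (conj a * c - conj b * d).re ^ 2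
        + 4 * (conj a * c + conj b * d).im ^ 2 := by
  simp only [normSq_apply, mul_re, mul_im, add_re, add_im, sub_re, conj_re, conj_im]
  ring

theorem ladder_le_sq_normSq (a b c d : ℂ) :
    (2 * (conj a * b + conj c * d).im) ^ 2 + (2 * (conj a * d + conj b * c).re) ^ 2
        + (normSq a - normSq b - normSq c + normSq d) ^ 2
        - (2 * (conj b * c - conj a * d).re) ^ 2
      ≤ (normSq a + normSq b + normSq c + normSq d) ^ 2 := by
  have := ladder_sum_of_squares a b c d
  nlinarith [sq_nonneg (conj a * b - conj c * d).re, sq_nonneg (conj a * c - conj b * d).re,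
    sq_nonneg (conj a * c + conj b * d).im]

theorem sum_sq_norm_fin_two_prod (ψ : Fin 2 × Fin 2 → ℂ) :
    ∑ x, ‖ψ x‖ ^ 2
      = normSq (ψ (0, 0)) + normSq (ψ (0, 1)) + normSq (ψ (1, 0)) + normSq (ψ (1, 1)) := by
  simp only [Fintype.sum_prod_type, Fin.sum_univ_two, Complex.sq_norm]
  ring

theorem e_I2_kron_Y (ψ : Fin 2 × Fin 2 → ℂ) :
    e (I2 ⊗ₖ Y) ψ = 2 * (conj (ψ (0, 0)) * ψ (0, 1) + conj (ψ (1, 0)) * ψ (1, 1)).im := by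
  simp only [e, dotProduct, Pi.star_apply, RCLike.star_def, mulVec, I2, Y, kroneckerMap_apply,
    one_apply, of_apply, cons_val', cons_val_fin_one, ite_mul, one_mul, zero_mul,
    Fintype.sum_prod_type, Finset.sum_ite_irrel, Fin.sum_univ_two, cons_val_zero, cons_val_one,
    Finset.sum_const_zero, Finset.sum_ite_eq, Finset.mem_univ, ↓reduceIte, neg_mul, zero_add,
    mul_neg, add_zero, add_re, neg_re, mul_re, conj_re, I_re, I_im, zero_sub, conj_im, mul_im,
    sub_neg_eq_add, neg_add_rev, neg_neg, add_im]
  ring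

theorem e_X_kron_X (ψ : Fin 2 × Fin 2 → ℂ) :
    e (X ⊗ₖ X) ψ = 2 * (conj (ψ (0, 0)) * ψ (1, 1) + conj (ψ (0, 1)) * ψ (1, 0)).re := by
  simp only [e, dotProduct, Pi.star_apply, RCLike.star_def, mulVec, X, kroneckerMap_apply,
    of_apply, cons_val', cons_val_fin_one, Fintype.sum_prod_type, Fin.sum_univ_two, cons_val_zero,
    cons_val_one, mul_zero, zero_mul, mul_one, zero_add, add_zero, one_mul, add_re, mul_re,
    conj_re, conj_im, neg_mul, sub_neg_eq_add]
  ring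

theorem e_Y_kron_Y (ψ : Fin 2 × Fin 2 → ℂ) :
    e (Y ⊗ₖ Y) ψ = 2 * (conj (ψ (0, 1)) * ψ (1, 0) - conj (ψ (0, 0)) * ψ (1, 1)).re := by
  simp only [e, dotProduct, Pi.star_apply, RCLike.star_def, mulVec, Y, kroneckerMap_apply,
    of_apply, cons_val', cons_val_fin_one, Fintype.sum_prod_type, Fin.sum_univ_two, cons_val_zero,
    cons_val_one, mul_zero, zero_mul, mul_neg, neg_mul, zero_add, add_zero, neg_zero, I_mul_I,
    neg_neg, one_mul, add_re, neg_re, mul_re, conj_re, conj_im, sub_neg_eq_add, neg_add_rev, sub_re]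
  ring

theorem e_Z_kron_Z (ψ : Fin 2 × Fin 2 → ℂ) :
    e (Z ⊗ₖ Z) ψ
      = normSq (ψ (0, 0)) - normSq (ψ (0, 1)) - normSq (ψ (1, 0)) + normSq (ψ (1, 1)) := by
  simp only [e, dotProduct, Pi.star_apply, RCLike.star_def, mulVec, Z, kroneckerMap_apply,
    of_apply, cons_val', cons_val_fin_one, Fintype.sum_prod_type, Fin.sum_univ_two, cons_val_zero,
    cons_val_one, mul_one, mul_zero, zero_mul, add_zero, mul_neg, neg_mul, zero_add, one_mul,
    neg_zero, neg_neg, add_re, mul_re, conj_re, conj_im, sub_neg_eq_add, neg_re, neg_add_rev,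
    normSq_apply]
  ring

/-- Two-qubit identity: `⟨I⊗Y⟩² + ⟨X⊗X⟩² + ⟨Z⊗Z⟩² − ⟨Y⊗Y⟩² ≤ 1` for every unit
vector, with equality for the maximally entangled state. -/
theorem two_qubit_ladder_bound :
    (∀ ψ : Fin 2 × Fin 2 → ℂ, (∑ x, ‖ψ x‖^2 = 1) →
      e (I2 ⊗ₖ Y) ψ ^ 2 + e (X ⊗ₖ X) ψ ^ 2 + e (Z ⊗ₖ Z) ψ ^ 2
        - e (Y ⊗ₖ Y) ψ ^ 2 ≤ 1) ∧
    (e (I2 ⊗ₖ Y) ψME ^ 2 + e (X ⊗ₖ X) ψME ^ 2 + e (Z ⊗ₖ Z) ψME ^ 2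
        - e (Y ⊗ₖ Y) ψME ^ 2 = 1) := by
  constructor
  · intro ψ hψ
    rw [sum_sq_norm_fin_two_prod] at hψ
    have hbound := ladder_le_sq_normSq (ψ (0, 0)) (ψ (0, 1)) (ψ (1, 0)) (ψ (1, 1))
    rw [hψ, one_pow] at hbound
    rwa [e_I2_kron_Y, e_X_kron_X, e_Z_kron_Z, e_Y_kron_Y]
  · have hhalf : (Real.sqrt 2)⁻¹ * (Real.sqrt 2)⁻¹ = (2⁻¹ : ℝ) := by
      rw [← mul_inv, Real.mul_self_sqrt zero_le_two]
    simp only [e_I2_kron_Y, e_X_kron_X, e_Z_kron_Z, e_Y_kron_Y, ψME, ↓reduceIte, zero_ne_one,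
      one_ne_zero, one_div, conj_ofReal, map_zero, mul_zero, zero_mul, add_zero, zero_sub, zero_im,
      ← ofReal_mul, ofReal_re, neg_re, normSq_ofReal, sub_zero, hhalf]
    norm_num

end Stmt13
end

section
/- For every unit vector |ψ⟩ ∈ ℂ^4, ⟨I⊗X⟩² + ⟨I⊗Z⟩² + ⟨X⊗Y⟩² + ⟨Y⊗Y⟩² + ⟨Z⊗Y⟩² = 1, where ⟨A⟩ = ⟨ψ|A|ψ⟩. -/
open Matrix Kronecker

namespace Stmt14

def X : Matrix (Fin 2) (Fin 2) ℂ := !![0, 1; 1, 0]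
def Y : Matrix (Fin 2) (Fin 2) ℂ := !![0, -Complex.I; Complex.I, 0]
def Z : Matrix (Fin 2) (Fin 2) ℂ := !![1, 0; 0, -1]
def I2 : Matrix (Fin 2) (Fin 2) ℂ := 1

/-- Expectation value `⟨ψ|A|ψ⟩` (real part) of a two-qubit observable. -/
noncomputable def e (A : Matrix (Fin 2 × Fin 2) (Fin 2 × Fin 2) ℂ)
    (ψ : Fin 2 × Fin 2 → ℂ) : ℝ := (star ψ ⬝ᵥ A.mulVec ψ).re

/-!
Write `a, b, c, d` for `ψ (0,0), ψ (1,0), ψ (0,1), ψ (1,1)` and put `α = |a|² + |b|²`,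
`β = |c|² + |d|²`. Then `⟨I⊗Z⟩ = α - β`, `⟨I⊗X⟩ + i⟨Z⊗Y⟩ = 2 (āc + bd̄)` and
`⟨Y⊗Y⟩ + i⟨X⊗Y⟩ = 2 (b̄c - ad̄)`, while `|āc + bd̄|² + |b̄c - ad̄|² = αβ` is the multiplicativity of
the quaternion norm in complex coordinates (the five expectations are the quaternionic Hopf map
`ℍ² → ℝ⁵`). So the sum of squares is `(α - β)² + 4αβ = (α + β)² = ‖ψ‖⁴`.
-/

open ComplexConjugate

theorem normSq_conj_mul_add_normSq_conj_mul_sub (a b c d : ℂ) :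
    Complex.normSq (conj a * c + b * conj d) + Complex.normSq (conj b * c - a * conj d) =
      (Complex.normSq a + Complex.normSq b) * (Complex.normSq c + Complex.normSq d) := by
  simp only [Complex.normSq_apply, Complex.add_re, Complex.add_im, Complex.sub_re, Complex.sub_im,
    Complex.mul_re, Complex.mul_im, Complex.conj_re, Complex.conj_im]
  ring

section

variable (ψ : Fin 2 × Fin 2 → ℂ)

theorem e_I2_kronecker_Z : e (I2 ⊗ₖ Z) ψ = Complex.normSq (ψ (0,0)) + Complex.normSq (ψ (1,0))
    - (Complex.normSq (ψ (0,1)) + Complex.normSq (ψ (1,1))) := by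
  simp only [e, dotProduct, mulVec, Fintype.sum_prod_type, Fin.sum_univ_two, kroneckerMap_apply,
    I2, one_fin_two, Z, of_apply, cons_val', cons_val_zero, cons_val_one, cons_val_fin_one,
    Pi.star_apply, RCLike.star_def, Complex.add_re, Complex.add_im, Complex.mul_re, Complex.mul_im,
    Complex.neg_re, Complex.neg_im, Complex.conj_re, Complex.conj_im, Complex.one_re,
    Complex.one_im, Complex.zero_re, Complex.zero_im, Complex.normSq_apply]
  ring

theorem e_I2_kronecker_X :
    e (I2 ⊗ₖ X) ψ = 2 * (conj (ψ (0,0)) * ψ (0,1) + ψ (1,0) * conj (ψ (1,1))).re := by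
  simp only [e, dotProduct, mulVec, Fintype.sum_prod_type, Fin.sum_univ_two, kroneckerMap_apply,
    I2, one_fin_two, X, of_apply, cons_val', cons_val_zero, cons_val_one, cons_val_fin_one,
    Pi.star_apply, RCLike.star_def, Complex.add_re, Complex.add_im, Complex.mul_re, Complex.mul_im,
    Complex.conj_re, Complex.conj_im, Complex.one_re, Complex.one_im, Complex.zero_re,
    Complex.zero_im]
  ring

theorem e_Z_kronecker_Y :
    e (Z ⊗ₖ Y) ψ = 2 * (conj (ψ (0,0)) * ψ (0,1) + ψ (1,0) * conj (ψ (1,1))).im := by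
  simp only [e, dotProduct, mulVec, Fintype.sum_prod_type, Fin.sum_univ_two, kroneckerMap_apply,
    Y, Z, of_apply, cons_val', cons_val_zero, cons_val_one, cons_val_fin_one,
    Pi.star_apply, RCLike.star_def, Complex.add_re, Complex.add_im, Complex.mul_re, Complex.mul_im,
    Complex.neg_re, Complex.neg_im, Complex.conj_re, Complex.conj_im, Complex.I_re, Complex.I_im,
    Complex.one_re, Complex.one_im, Complex.zero_re, Complex.zero_im]
  ring

theorem e_Y_kronecker_Y :
    e (Y ⊗ₖ Y) ψ = 2 * (conj (ψ (1,0)) * ψ (0,1) - ψ (0,0) * conj (ψ (1,1))).re := by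
  simp only [e, dotProduct, mulVec, Fintype.sum_prod_type, Fin.sum_univ_two, kroneckerMap_apply,
    Y, of_apply, cons_val', cons_val_zero, cons_val_one, cons_val_fin_one,
    Pi.star_apply, RCLike.star_def, Complex.add_re, Complex.add_im, Complex.sub_re,
    Complex.mul_re, Complex.mul_im, Complex.neg_re, Complex.neg_im, Complex.conj_re,
    Complex.conj_im, Complex.I_re, Complex.I_im, Complex.zero_re, Complex.zero_im]
  ring

theorem e_X_kronecker_Y :
    e (X ⊗ₖ Y) ψ = 2 * (conj (ψ (1,0)) * ψ (0,1) - ψ (0,0) * conj (ψ (1,1))).im := by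
  simp only [e, dotProduct, mulVec, Fintype.sum_prod_type, Fin.sum_univ_two, kroneckerMap_apply,
    X, Y, of_apply, cons_val', cons_val_zero, cons_val_one, cons_val_fin_one,
    Pi.star_apply, RCLike.star_def, Complex.add_re, Complex.add_im, Complex.sub_im,
    Complex.mul_re, Complex.mul_im, Complex.neg_re, Complex.neg_im, Complex.conj_re,
    Complex.conj_im, Complex.I_re, Complex.I_im, Complex.one_re, Complex.one_im, Complex.zero_re,
    Complex.zero_im]
  ring

theorem sum_sq_e_eq_sq_sum_norm_sq :
    e (I2 ⊗ₖ X) ψ ^ 2 + e (I2 ⊗ₖ Z) ψ ^ 2 + e (X ⊗ₖ Y) ψ ^ 2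
      + e (Y ⊗ₖ Y) ψ ^ 2 + e (Z ⊗ₖ Y) ψ ^ 2 = (∑ x, ‖ψ x‖ ^ 2) ^ 2 := by
  have hnorm := normSq_conj_mul_add_normSq_conj_mul_sub (ψ (0,0)) (ψ (1,0)) (ψ (0,1)) (ψ (1,1))
  rw [Complex.normSq_apply, Complex.normSq_apply (_ - _)] at hnorm
  simp only [Fintype.sum_prod_type, Fin.sum_univ_two, Complex.sq_norm]
  rw [e_I2_kronecker_X, e_I2_kronecker_Z, e_X_kronecker_Y, e_Y_kronecker_Y, e_Z_kronecker_Y]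
  linear_combination 4 * hnorm

end

/-- For every unit vector `ψ ∈ ℂ⁴`,
`⟨I⊗X⟩² + ⟨I⊗Z⟩² + ⟨X⊗Y⟩² + ⟨Y⊗Y⟩² + ⟨Z⊗Y⟩² = 1`. -/
theorem c5_saur_sum_sq_eq_one (ψ : Fin 2 × Fin 2 → ℂ) (hψ : ∑ x, ‖ψ x‖^2 = 1) :
    e (I2 ⊗ₖ X) ψ ^ 2 + e (I2 ⊗ₖ Z) ψ ^ 2 + e (X ⊗ₖ Y) ψ ^ 2
      + e (Y ⊗ₖ Y) ψ ^ 2 + e (Z ⊗ₖ Y) ψ ^ 2 = 1 := by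
  rw [sum_sq_e_eq_sq_sum_norm_sq, hψ, one_pow]

end Stmt14
end
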